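/- Under the marshalling axioms, hash computations that use only the unboxed elements of corresponding structures agree: if R a b is a marshalling correspondence and f is any function from lists of integers to integers, then applying f to the sequence of unboxed payloads encountered in a fixed deterministic (depth-first, index-ordered) traversal of the structure reachable from a equals applying f to the corresponding traversal from b, provided both traversals terminate. -/

import Mathlib

/-- Heap values: unboxed words, or pointers to buffers. -/
inductive Value where
  | unboxed (z : ℤ)
  | ptr (a : ℕ)
deriving DecidableEq

/-- A heap maps each address to the buffer (list of values) it holds. -/
def Heap : Type := ℕ → List Value

/-- Reachability from a root value: the closure under following pointers to
buffer elements. -/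
inductive Reach (heap : Heap) (root : Value) : Value → Prop
  | root : Reach heap root root
  | step {p : ℕ} {v : Value} :
      Reach heap root (.ptr p) → v ∈ heap p → Reach heap root v

/-- `Edge heap v i w`: the buffer pointed by `v` has `w` as its `i`-th
component (a points-to edge labeled `i`). -/
def Edge (heap : Heap) (v : Value) (i : ℕ) (w : Value) : Prop :=
  ∃ p : ℕ, v = .ptr p ∧ (heap p)[i]? = some w

/-- Closure of a relation under taking equally-indexed components of
corresponding buffers. -/
def ClosedUnderComponents (heap₁ heap₂ : Heap) (S : Value → Value → Prop) : Prop :=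
  ∀ p q : ℕ, S (.ptr p) (.ptr q) →
    ∀ (i : ℕ) (h₁ : i < (heap₁ p).length) (h₂ : i < (heap₂ q).length),
      S ((heap₁ p).get ⟨i, h₁⟩) ((heap₂ q).get ⟨i, h₂⟩)

/-- Fueled deterministic depth-first, index-ordered traversal: visits buffer
elements in index order, records unboxed payloads, and visits each distinct
pointer at most once (using pointer equality, i.e. address equality, to detect
revisits).  Returns the recorded payload list and the visited set, or `none`
if the fuel runs out. -/
def traverse (heap : Heap) : ℕ → List ℕ → List Value → Option (List ℤ × List ℕ)
  | _, visited, [] => some ([], visited)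
  | 0, _, _ :: _ => none
  | fuel + 1, visited, .unboxed z :: rest =>
      (traverse heap fuel visited rest).map fun (l, vis) => (z :: l, vis)
  | fuel + 1, visited, .ptr p :: rest =>
      if p ∈ visited then traverse heap fuel visited rest
      else traverse heap fuel (p :: visited) (heap p ++ rest)

/-!
Under a marshalling correspondence the two traversals run in lockstep: the work stacks stay
componentwise corresponding, and since `R` is bi-unique on pointers so do the visited lists,
hence both runs take the same branch at every revisit test and record the same payloads.
Extra fuel does not change a terminating run, so runs with different fuel are compared at
the larger one.
-/

/-- The marshalling axioms for a correspondence `R` between the values of two heaps. -/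
structure MarshallingCorrespondence (heap₁ heap₂ : Heap) (R : Value → Value → Prop) : Prop where
  isUnboxed_iff : ∀ a b, R a b → ((∃ z, a = .unboxed z) ↔ (∃ z, b = .unboxed z))
  length_eq : ∀ p q : ℕ, R (.ptr p) (.ptr q) → (heap₁ p).length = (heap₂ q).length
  closedUnderComponents : ClosedUnderComponents heap₁ heap₂ R
  unboxed_eq : ∀ z w : ℤ, R (.unboxed z) (.unboxed w) → z = w
  ptr_eq_iff : ∀ p₁ q₁ p₂ q₂ : ℕ, R (.ptr p₁) (.ptr q₁) → R (.ptr p₂) (.ptr q₂) →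
    (p₁ = p₂ ↔ q₁ = q₂)

theorem traverse_of_le {heap : Heap} {n m : ℕ} (hnm : n ≤ m) {vis : List ℕ} {st : List Value}
    {r : List ℤ × List ℕ} (h : traverse heap n vis st = some r) :
    traverse heap m vis st = some r := by
  induction n generalizing m vis st r with
  | zero => cases st with
    | nil => simpa [_root_.traverse] using h
    | cons => simp [_root_.traverse] at h
  | succ n ih =>
    obtain ⟨m, rfl⟩ : ∃ k, m = k + 1 := Nat.exists_eq_add_one.mpr (by omega)
    have hnm : n ≤ m := by omega
    match st, h with
    | [], h => simpa [_root_.traverse] using h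
    | .unboxed z :: rest, h =>
      simp only [_root_.traverse, Option.map_eq_some_iff] at h ⊢
      obtain ⟨r', hr', rfl⟩ := h
      exact ⟨r', ih hnm hr', rfl⟩
    | .ptr p :: rest, h =>
      simp only [_root_.traverse] at h ⊢
      split_ifs at h ⊢ <;> exact ih hnm h

namespace MarshallingCorrespondence

variable {heap₁ heap₂ : Heap} {R : Value → Value → Prop}

theorem biUnique_ptr (hR : MarshallingCorrespondence heap₁ heap₂ R) :
    Relator.BiUnique fun p q => R (.ptr p) (.ptr q) :=
  ⟨fun _ _ _ h₁ h₂ => (hR.ptr_eq_iff _ _ _ _ h₁ h₂).2 rfl,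
    fun _ _ _ h₁ h₂ => (hR.ptr_eq_iff _ _ _ _ h₁ h₂).1 rfl⟩

theorem forall₂_buffer (hR : MarshallingCorrespondence heap₁ heap₂ R) {p q : ℕ}
    (hpq : R (.ptr p) (.ptr q)) : List.Forall₂ R (heap₁ p) (heap₂ q) :=
  List.forall₂_iff_get.2 ⟨hR.length_eq p q hpq, hR.closedUnderComponents p q hpq⟩

theorem unboxed_or_ptr (hR : MarshallingCorrespondence heap₁ heap₂ R) {a b : Value}
    (hab : R a b) :
    (∃ z, a = .unboxed z ∧ b = .unboxed z) ∨
      ∃ p q, a = .ptr p ∧ b = .ptr q ∧ R (.ptr p) (.ptr q) := by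
  have hbox := hR.isUnboxed_iff a b hab
  cases a with
  | unboxed z =>
    obtain ⟨w, rfl⟩ := hbox.1 ⟨z, rfl⟩
    exact .inl ⟨z, rfl, by rw [hR.unboxed_eq z w hab]⟩
  | ptr p =>
    cases b with
    | unboxed w => simp at hbox
    | ptr q => exact .inr ⟨p, q, rfl, rfl, hab⟩

theorem traverse_map_fst_eq (hR : MarshallingCorrespondence heap₁ heap₂ R) (n : ℕ)
    {vis₁ vis₂ : List ℕ} {st₁ st₂ : List Value}
    (hvis : List.Forall₂ (fun p q => R (.ptr p) (.ptr q)) vis₁ vis₂)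
    (hst : List.Forall₂ R st₁ st₂) :
    (traverse heap₁ n vis₁ st₁).map Prod.fst = (traverse heap₂ n vis₂ st₂).map Prod.fst := by
  induction n generalizing vis₁ vis₂ st₁ st₂ with
  | zero => cases hst with
    | nil => simp [_root_.traverse]
    | cons hab _ =>
      rcases hR.unboxed_or_ptr hab with ⟨z, rfl, rfl⟩ | ⟨p, q, rfl, rfl, _⟩ <;> rfl
  | succ n ih => cases hst with
    | nil => simp [_root_.traverse]
    | cons hab hrest =>
      rcases hR.unboxed_or_ptr hab with ⟨z, rfl, rfl⟩ | ⟨p, q, rfl, rfl, hpq⟩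
      · simpa only [_root_.traverse, Option.map_map, Function.comp_def] using
          congrArg (Option.map (List.cons z)) (ih hvis hrest)
      · have hmem : p ∈ vis₁ ↔ q ∈ vis₂ := List.rel_mem hR.biUnique_ptr hpq hvis
        simp only [_root_.traverse]
        by_cases hp : p ∈ vis₁
        · rw [if_pos hp, if_pos (hmem.1 hp)]
          exact ih hvis hrest
        · rw [if_neg hp, if_neg (mt hmem.2 hp)]
          exact ih (.cons hpq hvis) (List.rel_append (hR.forall₂_buffer hpq) hrest)

end MarshallingCorrespondence

/-- under the marshalling axioms, hash computations using only
the unboxed elements encountered along the deterministic traversal of two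
corresponding structures agree, provided both traversals terminate. -/
theorem marshalling_traversal_hashes_agree
    (heap₁ heap₂ : Heap) (R : Value → Value → Prop)
    (hbox : ∀ a b, R a b → ((∃ z, a = .unboxed z) ↔ (∃ z, b = .unboxed z)))
    (hlen : ∀ p q : ℕ, R (.ptr p) (.ptr q) → (heap₁ p).length = (heap₂ q).length)
    (hcomp : ClosedUnderComponents heap₁ heap₂ R)
    (hunboxed : ∀ z w : ℤ, R (.unboxed z) (.unboxed w) → z = w)
    (hptr : ∀ p₁ q₁ p₂ q₂ : ℕ, R (.ptr p₁) (.ptr q₁) → R (.ptr p₂) (.ptr q₂) →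
      (p₁ = p₂ ↔ q₁ = q₂))
    (a b : Value) (hab : R a b)
    (fuel₁ fuel₂ : ℕ) (l₁ l₂ : List ℤ) (vis₁ vis₂ : List ℕ)
    (h₁ : traverse heap₁ fuel₁ [] [a] = some (l₁, vis₁))
    (h₂ : traverse heap₂ fuel₂ [] [b] = some (l₂, vis₂)) :
    ∀ f : List ℤ → ℤ, f l₁ = f l₂ := by
  intro f
  have hR : MarshallingCorrespondence heap₁ heap₂ R := ⟨hbox, hlen, hcomp, hunboxed, hptr⟩
  have hlockstep := hR.traverse_map_fst_eq (max fuel₁ fuel₂) .nil (.cons hab .nil)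
  rw [traverse_of_le (le_max_left _ _) h₁, traverse_of_le (le_max_right _ _) h₂] at hlockstep
  exact congrArg f (Option.some.inj hlockstep)
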